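/- arXiv:math/9804087 — 3 statements merged into one kernel-verified Lean document; each statement's English description precedes it below -/
import Mathlib

section
/- For complex numbers α_0, α_1, ..., α_m with each real part greater than −1, the integral over the simplex {u_1,...,u_m ≥ 0, u_1+...+u_m ≤ 1} of ∏_{i=1}^m u_i^{α_i}/Γ(α_i+1) times (1−u_1−...−u_m)^{α_0}/Γ(α_0+1) with respect to du_1...du_m equals 1/Γ(α_0+α_1+...+α_m+m+1). -/
/-!
With `φ_a(x) = x ^ a / Γ(a + 1)`, Euler's beta integral is the convolution identity
`∫₀ᶜ φ_a(t) φ_b(c - t) dt = φ_{a+b+1}(c)`. Integrating out the coordinate `t = u₁` of the simplex,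
with the other coordinates `v` fixed and `c = 1 - ∑ v`, therefore turns the integrand with
parameters `(α₀; α₁, …, α_m)` into the `(m-1)`-dimensional one with parameters
`(α₁ + α₀ + 1; α₂, …, α_m)`. After `m` steps only `φ_{α₀ + ∑ α + m}(1) = 1 / Γ(α₀ + ∑ α + m + 1)`
is left. The absolute values obey the same recursion up to a constant factor, since
`∫₀ᶜ |φ_a(t) φ_b(c - t)| dt` and `|φ_{a+b+1}(c)|` are both homogeneous of degree
`Re a + Re b + 1` in `c`; this gives the integrability that Fubini's theorem needs.
-/

open MeasureTheory Set

namespace Dirichlet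

noncomputable def phi (a : ℂ) (x : ℝ) : ℂ := (x : ℂ) ^ a / Complex.Gamma (a + 1)

@[fun_prop]
lemma measurable_phi (a : ℂ) : Measurable (phi a) := by
  unfold phi; fun_prop

lemma Gamma_add_one_ne_zero {a : ℂ} (ha : -1 < a.re) : Complex.Gamma (a + 1) ≠ 0 :=
  Complex.Gamma_ne_zero_of_re_pos (by simp; linarith)

lemma phi_ne_zero {a : ℂ} (ha : -1 < a.re) {x : ℝ} (hx : 0 < x) : phi a x ≠ 0 :=
  div_ne_zero (Complex.cpow_ne_zero_iff.2 (Or.inl (by exact_mod_cast hx.ne')))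
    (Gamma_add_one_ne_zero ha)

lemma norm_phi_mul (a : ℂ) {c x : ℝ} (hc : 0 < c) (hx : 0 ≤ x) :
    ‖phi a (c * x)‖ = c ^ a.re * ‖phi a x‖ := by
  rw [phi, phi, Complex.ofReal_mul, Complex.mul_cpow_ofReal_nonneg hc.le hx, mul_div_assoc,
    norm_mul, Complex.norm_cpow_eq_rpow_re_of_pos hc]

theorem integral_phi_mul_phi_sub {a b : ℂ} (ha : -1 < a.re) (hb : -1 < b.re) {c : ℝ}
    (hc : 0 < c) : ∫ t in Ioo 0 c, phi a t * phi b (c - t) = phi (a + b + 1) c := by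
  have hβ := Complex.betaIntegral_scaled (a + 1) (b + 1) hc
  rw [add_sub_cancel_right, add_sub_cancel_right, show a + 1 + (b + 1) - 1 = a + b + 1 by ring]
    at hβ
  have hΓ := Complex.Gamma_mul_Gamma_eq_betaIntegral (s := a + 1) (t := b + 1)
    (by simp; linarith) (by simp; linarith)
  rw [show a + 1 + (b + 1) = a + b + 1 + 1 by ring] at hΓ
  have hB : (a + 1).betaIntegral (b + 1) ≠ 0 :=
    right_ne_zero_of_mul (hΓ ▸ mul_ne_zero (Gamma_add_one_ne_zero ha) (Gamma_add_one_ne_zero hb))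
  have hΓab : Complex.Gamma (a + b + 1 + 1) ≠ 0 := Gamma_add_one_ne_zero (by simp; linarith)
  rw [← integral_Ioc_eq_integral_Ioo, ← intervalIntegral.integral_of_le hc.le]
  simp only [phi, div_mul_div_comm, Complex.ofReal_sub]
  rw [intervalIntegral.integral_div, hβ, hΓ]
  field_simp

theorem integrableOn_phi_mul_phi_sub {a b : ℂ} (ha : -1 < a.re) (hb : -1 < b.re) {c : ℝ}
    (hc : 0 < c) : IntegrableOn (fun t => phi a t * phi b (c - t)) (Ioo 0 c) :=
  -- a Bochner integral that is not zero has an integrable integrand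
  Integrable.of_integral_ne_zero <| by
    rw [integral_phi_mul_phi_sub ha hb hc]
    exact phi_ne_zero (by simp; linarith) hc

theorem exists_integral_norm_phi_mul_phi_sub {a b : ℂ} (ha : -1 < a.re) (hb : -1 < b.re) :
    ∃ K : ℝ, ∀ c > 0,
      ∫ t in Ioo 0 c, ‖phi a t * phi b (c - t)‖ = K * ‖phi (a + b + 1) c‖ := by
  set N := ∫ x in Ioo 0 1, ‖phi a x * phi b (1 - x)‖
  refine ⟨N / ‖phi (a + b + 1) 1‖, fun c hc => ?_⟩
  have h1 : ‖phi (a + b + 1) 1‖ ≠ 0 := norm_ne_zero_iff.2 (phi_ne_zero (by simp; linarith) one_pos)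
  have hscale : ∫ t in Ioo 0 c, ‖phi a t * phi b (c - t)‖ =
      c * ∫ x in Ioo 0 1, ‖phi a (c * x) * phi b (c - c * x)‖ := by
    rw [← integral_Ioc_eq_integral_Ioo, ← integral_Ioc_eq_integral_Ioo,
      ← intervalIntegral.integral_of_le hc.le, ← intervalIntegral.integral_of_le zero_le_one,
      intervalIntegral.integral_comp_mul_left (fun x => ‖phi a x * phi b (c - x)‖) hc.ne',
      mul_zero, mul_one, smul_eq_mul, mul_inv_cancel_left₀ hc.ne']
  have hhom : ∫ x in Ioo 0 1, ‖phi a (c * x) * phi b (c - c * x)‖ = c ^ (a.re + b.re) * N := by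
    rw [← integral_const_mul]
    refine setIntegral_congr_fun measurableSet_Ioo fun x hx => ?_
    rw [← mul_one_sub, norm_mul, norm_mul, norm_phi_mul a hc hx.1.le,
      norm_phi_mul b hc (by linarith [hx.2]), Real.rpow_add hc]
    ring
  have hend : ‖phi (a + b + 1) c‖ = c ^ (a.re + b.re + 1) * ‖phi (a + b + 1) 1‖ := by
    simpa using norm_phi_mul (a + b + 1) hc zero_le_one
  rw [hscale, hhom, hend, Real.rpow_add_one hc.ne']
  field_simp

/-- The null face `∑ u = 1` is left out: over it the recursion would have to produce `phi β 0`,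
which is not `0` when `β = 0` (`0 ^ 0 = 1`). -/
def simplex (m : ℕ) : Set (Fin m → ℝ) := {u | (∀ i, 0 ≤ u i) ∧ ∑ i, u i < 1}

lemma measurableSet_simplex (m : ℕ) : MeasurableSet (simplex m) := by
  unfold simplex; measurability

lemma simplex_zero : simplex 0 = univ := by
  ext u; simp [simplex]

lemma cons_mem_simplex {m : ℕ} (t : ℝ) (v : Fin m → ℝ) :
    (Fin.cons t v : Fin (m + 1) → ℝ) ∈ simplex (m + 1) ↔
      v ∈ simplex m ∧ t ∈ Ico 0 (1 - ∑ i, v i) := by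
  simp only [simplex, mem_ofPred_eq, Fin.forall_fin_succ, Fin.cons_zero, Fin.cons_succ,
    Fin.sum_cons, mem_Ico]
  constructor
  · rintro ⟨⟨ht, hv⟩, hs⟩
    exact ⟨⟨hv, by linarith⟩, ht, by linarith⟩
  · rintro ⟨⟨hv, -⟩, ht, hs⟩
    exact ⟨⟨ht, hv⟩, by linarith⟩

noncomputable def consEquiv (m : ℕ) : ℝ × (Fin m → ℝ) ≃ᵐ (Fin (m + 1) → ℝ) :=
  (MeasurableEquiv.piFinSuccAbove (fun _ => ℝ) 0).symm

@[simp]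
lemma consEquiv_apply {m : ℕ} (p : ℝ × (Fin m → ℝ)) : consEquiv m p = Fin.cons p.1 p.2 := by
  simp [consEquiv, MeasurableEquiv.piFinSuccAbove_symm_apply, Fin.insertNthEquiv,
    Fin.insertNth_zero']

lemma measurePreserving_consEquiv (m : ℕ) :
    MeasurePreserving (consEquiv m) (volume.prod volume) volume :=
  (measurePreserving_piFinSuccAbove (fun _ : Fin (m + 1) => (volume : Measure ℝ)) 0).symm

lemma measurable_cons (m : ℕ) :
    Measurable fun p : ℝ × (Fin m → ℝ) => (Fin.cons p.1 p.2 : Fin (m + 1) → ℝ) :=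
  (funext consEquiv_apply : ⇑(consEquiv m) = _) ▸ (consEquiv m).measurable

lemma integrable_comp_cons_iff {E : Type*} [NormedAddCommGroup E] {m : ℕ}
    {f : (Fin (m + 1) → ℝ) → E} :
    Integrable (fun p : ℝ × (Fin m → ℝ) => f (Fin.cons p.1 p.2)) (volume.prod volume) ↔
      Integrable f := by
  simpa [Function.comp_def] using
    (measurePreserving_consEquiv m).integrable_comp_emb (consEquiv m).measurableEmbedding (g := f)

lemma integral_comp_cons {E : Type*} [NormedAddCommGroup E] [NormedSpace ℝ E] {m : ℕ}
    (f : (Fin (m + 1) → ℝ) → E) :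
    ∫ p : ℝ × (Fin m → ℝ), f (Fin.cons p.1 p.2) ∂(volume.prod volume) = ∫ u, f u := by
  simpa using (measurePreserving_consEquiv m).integral_comp' f

lemma volume_sum_eq_one (m : ℕ) : volume {u : Fin m → ℝ | ∑ i, u i = 1} = 0 := by
  cases m with
  | zero => simp
  | succ m =>
    have hmeas : MeasurableSet {p : ℝ × (Fin m → ℝ) | p.1 + ∑ i, p.2 i = 1} := by
      measurability
    rw [← (measurePreserving_consEquiv m).measure_preimage (by measurability),
      Measure.prod_apply_symm (by simpa [Fin.sum_cons] using hmeas)]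
    refine (lintegral_congr fun v => measure_mono_null (fun t ht => ?_)
      (measure_singleton (1 - ∑ i, v i))).trans lintegral_zero
    simp only [mem_preimage, consEquiv_apply, Fin.sum_cons, mem_ofPred_eq] at ht
    exact eq_sub_of_add_eq ht

lemma ae_eq_simplex (m : ℕ) :
    {u : Fin m → ℝ | (∀ i, 0 ≤ u i) ∧ ∑ i, u i ≤ 1} =ᵐ[volume] simplex m := by
  refine ae_eq_set.2 ⟨measure_mono_null (fun u hu => ?_) (volume_sum_eq_one m), ?_⟩
  · exact le_antisymm hu.1.2 (not_lt.1 fun h => hu.2 ⟨hu.1.1, h⟩)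
  · have hsub : simplex m ⊆ {u : Fin m → ℝ | (∀ i, 0 ≤ u i) ∧ ∑ i, u i ≤ 1} :=
      fun u hu => ⟨hu.1, hu.2.le⟩
    rw [sdiff_eq_empty.2 hsub, measure_empty]

noncomputable def density {m : ℕ} (α₀ : ℂ) (α : Fin m → ℂ) (u : Fin m → ℝ) : ℂ :=
  (∏ i, phi (α i) (u i)) * phi α₀ (1 - ∑ i, u i)

lemma measurable_density {m : ℕ} (α₀ : ℂ) (α : Fin m → ℂ) : Measurable (density α₀ α) := by
  unfold density; fun_prop

lemma indicator_density_cons {m : ℕ} (α₀ : ℂ) (α : Fin (m + 1) → ℂ) (t : ℝ) (v : Fin m → ℝ) :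
    (simplex (m + 1)).indicator (density α₀ α) (Fin.cons t v) =
      (simplex m).indicator (fun v => (Ico 0 (1 - ∑ i, v i)).indicator
        (fun t => phi (α 0) t * phi α₀ (1 - ∑ i, v i - t)) t * ∏ i, phi (α i.succ) (v i)) v := by
  by_cases hv : v ∈ simplex m
  · by_cases ht : t ∈ Ico 0 (1 - ∑ i, v i)
    · rw [indicator_of_mem ((cons_mem_simplex t v).2 ⟨hv, ht⟩), indicator_of_mem hv,
        indicator_of_mem ht, density, Fin.prod_univ_succ, Fin.sum_cons]
      simp only [Fin.cons_zero, Fin.cons_succ, sub_add_eq_sub_sub_swap]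
      ring
    · rw [indicator_of_notMem (fun h => ht ((cons_mem_simplex t v).1 h).2), indicator_of_mem hv,
        indicator_of_notMem ht, zero_mul]
  · rw [indicator_of_notMem (fun h => hv ((cons_mem_simplex t v).1 h).1), indicator_of_notMem hv]

section Fibre

variable {m : ℕ} {α₀ : ℂ} {α : Fin (m + 1) → ℂ}

lemma integrable_indicator_density_cons (h0 : -1 < (α 0).re) (h₀ : -1 < α₀.re)
    (v : Fin m → ℝ) :
    Integrable (fun t => (simplex (m + 1)).indicator (density α₀ α) (Fin.cons t v)) := by
  simp_rw [indicator_density_cons]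
  by_cases hv : v ∈ simplex m
  · simp_rw [indicator_of_mem hv]
    refine Integrable.mul_const ((integrable_indicator_iff measurableSet_Ico).2 ?_) _
    exact (integrableOn_Ico_iff_integrableOn_Ioo enorm_ne_top).2
      (integrableOn_phi_mul_phi_sub h0 h₀ (by linarith [hv.2]))
  · simp_rw [indicator_of_notMem hv]
    exact integrable_zero _ _ _

lemma integral_indicator_density_cons (h0 : -1 < (α 0).re) (h₀ : -1 < α₀.re)
    (v : Fin m → ℝ) :
    ∫ t, (simplex (m + 1)).indicator (density α₀ α) (Fin.cons t v) =
      (simplex m).indicator (density (α 0 + α₀ + 1) (Fin.tail α)) v := by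
  simp_rw [indicator_density_cons]
  by_cases hv : v ∈ simplex m
  · simp_rw [indicator_of_mem hv]
    rw [integral_mul_const, integral_indicator measurableSet_Ico, integral_Ico_eq_integral_Ioo,
      integral_phi_mul_phi_sub h0 h₀ (by linarith [hv.2]), density, mul_comm]
    rfl
  · simp_rw [indicator_of_notMem hv, integral_zero]

lemma exists_integral_norm_indicator_density_cons (h0 : -1 < (α 0).re) (h₀ : -1 < α₀.re) :
    ∃ K : ℝ, ∀ v : Fin m → ℝ,
      ∫ t, ‖(simplex (m + 1)).indicator (density α₀ α) (Fin.cons t v)‖ =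
        K * ‖(simplex m).indicator (density (α 0 + α₀ + 1) (Fin.tail α)) v‖ := by
  obtain ⟨K, hK⟩ := exists_integral_norm_phi_mul_phi_sub h0 h₀
  refine ⟨K, fun v => ?_⟩
  simp_rw [indicator_density_cons]
  by_cases hv : v ∈ simplex m
  · simp_rw [indicator_of_mem hv, norm_mul, norm_indicator_eq_indicator_norm]
    rw [integral_mul_const, integral_indicator measurableSet_Ico, integral_Ico_eq_integral_Ioo,
      hK _ (by linarith [hv.2]), density, norm_mul, mul_comm (‖∏ i, _‖), mul_assoc]
    rfl
  · simp_rw [indicator_of_notMem hv, norm_zero, integral_zero, mul_zero]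

end Fibre

theorem integrableOn_density {m : ℕ} {α₀ : ℂ} {α : Fin m → ℂ} (h₀ : -1 < α₀.re)
    (h : ∀ i, -1 < (α i).re) : IntegrableOn (density α₀ α) (simplex m) := by
  induction m generalizing α₀ with
  | zero =>
    rw [simplex_zero, integrableOn_univ]
    exact (integrable_const (phi α₀ 1)).congr (ae_of_all _ fun u => by simp [density])
  | succ m ih =>
    rw [← integrable_indicator_iff (measurableSet_simplex _), ← integrable_comp_cons_iff]
    obtain ⟨K, hK⟩ := exists_integral_norm_indicator_density_cons (h 0) h₀
    refine (integrable_prod_iff' ?_).2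
      ⟨ae_of_all _ (integrable_indicator_density_cons (h 0) h₀), ?_⟩
    · exact (((measurable_density α₀ α).indicator (measurableSet_simplex _)).comp
        (measurable_cons m)).aestronglyMeasurable
    · simp_rw [hK]
      refine (Integrable.norm ?_).const_mul K
      refine (integrable_indicator_iff (measurableSet_simplex m)).2 (ih ?_ fun i => h i.succ)
      simp only [Complex.add_re, Complex.one_re]
      linarith [h 0]

theorem integral_density {m : ℕ} {α₀ : ℂ} {α : Fin m → ℂ} (h₀ : -1 < α₀.re)
    (h : ∀ i, -1 < (α i).re) :
    ∫ u in simplex m, density α₀ α u = 1 / Complex.Gamma (α₀ + ∑ i, α i + m + 1) := by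
  induction m generalizing α₀ with
  | zero =>
    simp [simplex_zero, density, phi, measureReal_def, volume_pi]
  | succ m ih =>
    have hβ : -1 < (α 0 + α₀ + 1).re := by
      simp only [Complex.add_re, Complex.one_re]
      linarith [h 0]
    have hint := integrable_comp_cons_iff.2 <|
      (integrable_indicator_iff (measurableSet_simplex _)).2 (integrableOn_density h₀ h)
    calc ∫ u in simplex (m + 1), density α₀ α u
        = ∫ v, ∫ t, (simplex (m + 1)).indicator (density α₀ α) (Fin.cons t v) := by
          rw [← integral_indicator (measurableSet_simplex _), ← integral_comp_cons,
            integral_prod_symm _ hint]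
      _ = ∫ v in simplex m, density (α 0 + α₀ + 1) (Fin.tail α) v := by
          simp_rw [integral_indicator_density_cons (h 0) h₀]
          exact integral_indicator (measurableSet_simplex m)
      _ = 1 / Complex.Gamma (α₀ + ∑ i, α i + (m + 1 : ℕ) + 1) := by
          rw [ih (α := Fin.tail α) hβ fun i => h i.succ, Fin.sum_univ_succ]
          congr 2
          push_cast
          simp only [Fin.tail]
          ring

end Dirichlet

open MeasureTheory Finset

theorem dirichlet_integral (m : ℕ) (α₀ : ℂ) (α : Fin m → ℂ)
    (h₀ : -1 < α₀.re) (h : ∀ i, -1 < (α i).re) :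
    ∫ u in {u : Fin m → ℝ | (∀ i, 0 ≤ u i) ∧ ∑ i, u i ≤ 1},
        (∏ i, ((u i : ℂ) ^ (α i) / Complex.Gamma (α i + 1))) *
          (((1 - ∑ i, u i : ℝ) : ℂ) ^ α₀ / Complex.Gamma (α₀ + 1)) =
      1 / Complex.Gamma (α₀ + ∑ i, α i + m + 1) := by
  rw [setIntegral_congr_set (Dirichlet.ae_eq_simplex m)]
  exact Dirichlet.integral_density h₀ h
end

section
/- Let −1 < z < 0, and r_1, r_2, u, v > 0 with r_1 < u. Then ∫_0^1 (uw−r_1)_+^{−z−1}/Γ(−z) · (vw+r_2)^{z−1}/Γ(z+1) dw = (u−r_1)^{−z}/Γ(−z+1) · (v+r_2)^z/Γ(z+1) · 1/(r_1 v + r_2 u). -/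
/-!
On `(r₁/u, 1)`, where the truncation is inactive, `(u w - r₁)^(-z-1) (v w + r₂)^(z-1)` is the
derivative of `(u w - r₁)^(-z) (v w + r₂)^z / (-z (r₁ v + r₂ u))`; this antiderivative vanishes at
`w = r₁/u`, and `Γ(1 - z) = -z Γ(-z)` turns the result into the stated constant.
-/

open MeasureTheory Set

theorem hasDerivAt_sub_rpow_mul_add_rpow {a b c d p x : ℝ} (h₁ : 0 < a * x - b)
    (h₂ : 0 < c * x + d) :
    HasDerivAt (fun w => (a * w - b) ^ p * (c * w + d) ^ (-p))
      (p * (a * d + b * c) * ((a * x - b) ^ (p - 1) * (c * x + d) ^ (-p - 1))) x := by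
  have hf : HasDerivAt (fun w => (a * w - b) ^ p) (p * (a * x - b) ^ (p - 1) * a) x :=
    (((hasDerivAt_id' x).const_mul a).sub_const b).rpow_const (Or.inl h₁.ne') |>.congr_deriv
      (by ring)
  have hg : HasDerivAt (fun w => (c * w + d) ^ (-p)) (-p * (c * x + d) ^ (-p - 1) * c) x :=
    (((hasDerivAt_id' x).const_mul c).add_const d).rpow_const (Or.inl h₂.ne') |>.congr_deriv
      (by ring)
  refine (hf.mul hg).congr_deriv ?_
  have eX : (a * x - b) ^ p = (a * x - b) ^ (p - 1) * (a * x - b) := by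
    rw [← Real.rpow_add_one h₁.ne', sub_add_cancel]
  have eY : (c * x + d) ^ (-p) = (c * x + d) ^ (-p - 1) * (c * x + d) := by
    rw [← Real.rpow_add_one h₂.ne', sub_add_cancel]
  rw [eX, eY]
  ring

theorem integral_Ioo_sub_rpow_mul_add_rpow {a b c d p : ℝ} (hp : 0 < p) (ha : 0 < a)
    (hb : 0 ≤ b) (hba : b < a) (hc : 0 ≤ c) (hd : 0 < d) :
    ∫ w in Ioo (b / a) 1, (a * w - b) ^ (p - 1) * (c * w + d) ^ (-p - 1) =
      (a - b) ^ p * (c + d) ^ (-p) / (p * (a * d + b * c)) := by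
  set F : ℝ → ℝ := fun w => (a * w - b) ^ p * (c * w + d) ^ (-p) / (p * (a * d + b * c))
  have hK : 0 < p * (a * d + b * c) := by positivity
  have h₁ : ∀ x ∈ Ioo (b / a) 1, 0 < a * x - b := fun x hx => by
    have := (div_lt_iff₀' ha).1 hx.1; linarith
  have h₂ : ∀ x ∈ Icc (b / a) 1, 0 < c * x + d := fun x hx => by
    have : 0 ≤ x := (div_nonneg hb ha.le).trans hx.1
    positivity
  have hderiv : ∀ x ∈ Ioo (b / a) 1,
      HasDerivAt F ((a * x - b) ^ (p - 1) * (c * x + d) ^ (-p - 1)) x := fun x hx =>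
    (hasDerivAt_sub_rpow_mul_add_rpow (p := p) (h₁ x hx) (h₂ x (Ioo_subset_Icc_self hx))).div_const
      _ |>.congr_deriv (mul_div_cancel_left₀ _ hK.ne')
  have hcont : ContinuousOn F (Icc (b / a) 1) := by
    refine ContinuousOn.div_const (ContinuousOn.mul ?_ ?_) _
    · exact (Continuous.continuousOn (by fun_prop)).rpow_const fun _ _ => Or.inr hp.le
    · exact (Continuous.continuousOn (by fun_prop)).rpow_const fun x hx => Or.inl (h₂ x hx).ne'
  have hba1 : b / a ≤ 1 := (div_le_one ha).2 hba.le
  have hint : IntervalIntegrable (fun x => (a * x - b) ^ (p - 1) * (c * x + d) ^ (-p - 1))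
      volume (b / a) 1 := by
    apply intervalIntegral.intervalIntegrable_deriv_of_nonneg (g := F) (by rwa [uIcc_of_le hba1])
    all_goals simp only [min_eq_left hba1, max_eq_right hba1]
    · exact hderiv
    · intro x hx
      have := h₁ x hx
      have := h₂ x (Ioo_subset_Icc_self hx)
      positivity
  rw [← integral_Ioc_eq_integral_Ioo, ← intervalIntegral.integral_of_le hba1,
    intervalIntegral.integral_eq_sub_of_hasDerivAt_of_le hba1 hcont hderiv hint]
  simp [F, mul_div_cancel₀ b ha.ne', Real.zero_rpow hp.ne']

theorem setIntegral_Ioo_ite_pos_mul {a b l r : ℝ} (ha : 0 < a) (hl : l ≤ b / a) (f g : ℝ → ℝ) :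
    ∫ w in Ioo l r, (if 0 < a * w - b then f w else 0) * g w =
      ∫ w in Ioo (b / a) r, f w * g w := by
  rw [setIntegral_eq_of_subset_of_forall_sdiff_eq_zero measurableSet_Ioo
    (Ioo_subset_Ioo_left hl)]
  · refine setIntegral_congr_fun measurableSet_Ioo fun w hw => ?_
    rw [if_pos (by have := (div_lt_iff₀' ha).1 hw.1; linarith)]
  · rintro w ⟨⟨-, hwr⟩, hw⟩
    have : w ≤ b / a := by by_contra! h; exact hw ⟨h, hwr⟩
    rw [if_neg (by have := (le_div_iff₀' ha).1 this; linarith), zero_mul]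

theorem hook_contraction_integral_general (z r₁ r₂ u v : ℝ)
    (hz₂ : z < 0)
    (hr₁ : 0 < r₁) (hr₂ : 0 < r₂) (hu : 0 < u) (hv : 0 < v) (h : r₁ < u) :
    ∫ w in Set.Ioo (0:ℝ) 1,
        ((if 0 < u * w - r₁ then (u * w - r₁) ^ (-z - 1) else 0) / Real.Gamma (-z)) *
          ((v * w + r₂) ^ (z - 1) / Real.Gamma (z + 1)) =
      ((u - r₁) ^ (-z) / Real.Gamma (-z + 1)) * ((v + r₂) ^ z / Real.Gamma (z + 1)) *
        (1 / (r₁ * v + r₂ * u)) := by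
  have hIoo := integral_Ioo_sub_rpow_mul_add_rpow (neg_pos.2 hz₂) hu hr₁.le h hv.le hr₂
  rw [neg_neg, show u * r₂ + r₁ * v = r₁ * v + r₂ * u by ring] at hIoo
  simp_rw [div_mul_div_comm]
  rw [integral_div, setIntegral_Ioo_ite_pos_mul hu (div_nonneg hr₁.le hu.le), hIoo,
    Real.Gamma_add_one (neg_ne_zero.2 hz₂.ne)]
  -- as an atom, the sum lets `ring` split the inverse of `-z * (r₁ * v + r₂ * u)`
  generalize r₁ * v + r₂ * u = D
  ring

theorem hook_contraction_integral (z r₁ r₂ u v : ℝ)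
    (hz₁ : -1 < z) (hz₂ : z < 0)
    (hr₁ : 0 < r₁) (hr₂ : 0 < r₂) (hu : 0 < u) (hv : 0 < v) (h : r₁ < u) :
    ∫ w in Set.Ioo (0:ℝ) 1,
        ((if 0 < u * w - r₁ then (u * w - r₁) ^ (-z - 1) else 0) / Real.Gamma (-z)) *
          ((v * w + r₂) ^ (z - 1) / Real.Gamma (z + 1)) =
      ((u - r₁) ^ (-z) / Real.Gamma (-z + 1)) * ((v + r₂) ^ z / Real.Gamma (z + 1)) *
        (1 / (r₁ * v + r₂ * u)) :=
  hook_contraction_integral_general z r₁ r₂ u v hz₂ hr₁ hr₂ hu hv h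
end

section
/- The lifting of the Poisson–Dirichlet process PD(t) is the Poisson process on (0,∞) with intensity t·e^{−x}/x. Concretely: if ρ_n(x_1,...,x_n) = t^n (1−x_1−...−x_n)_+^{t−1}/(x_1···x_n) for x_i > 0, then for all x_1,...,x_n > 0, ∫_0^∞ [s^{t−1}/Γ(t)] e^{−s} ρ_n(x_1/s, ..., x_n/s) s^{−n} ds = t^n e^{−x_1−...−x_n}/(x_1···x_n). -/
open Finset MeasureTheory

/-- Lifting the Poisson–Dirichlet correlation functions yields those of the Poisson
process on `(0,∞)` with intensity `t e^{−x}/x`. -/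
theorem lifted_poisson_dirichlet (t : ℝ) (ht : 0 < t) (n : ℕ)
    (x : Fin n → ℝ) (hx : ∀ i, 0 < x i) :
    ∫ s in Set.Ioi (0:ℝ),
        (s ^ (t - 1) / Real.Gamma t) * Real.exp (-s) *
          (t ^ n *
              (if 0 < 1 - ∑ i, x i / s then (1 - ∑ i, x i / s) ^ (t - 1) else 0) /
            ∏ i, (x i / s)) * s ^ (-(n : ℝ)) =
      t ^ n * Real.exp (-∑ i, x i) / ∏ i, x i := by
  set S := ∑ i, x i with hSdef
  set P := ∏ i, x i with hPdef
  have hP0 : 0 < P := Finset.prod_pos fun i _ => hx i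
  have hS0 : 0 ≤ S := Finset.sum_nonneg fun i _ => (hx i).le
  have hΓ : 0 < Real.Gamma t := Real.Gamma_pos_of_pos ht
  have key : ∀ s ∈ Set.Ioi (0:ℝ),
      (s ^ (t - 1) / Real.Gamma t) * Real.exp (-s) *
          (t ^ n * (if 0 < 1 - ∑ i, x i / s then (1 - ∑ i, x i / s) ^ (t - 1) else 0) /
            ∏ i, (x i / s)) * s ^ (-(n : ℝ)) =
      Set.indicator (Set.Ioi S)
        (fun s => (t ^ n / (Real.Gamma t * P)) * ((s - S) ^ (t - 1) * Real.exp (-s))) s := by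
    intro s hs
    have hs0 : 0 < s := hs
    have hsum : ∑ i, x i / s = S / s := by rw [hSdef, Finset.sum_div]
    have hprod : ∏ i, (x i / s) = P / s ^ n := by
      rw [hPdef, Finset.prod_div_distrib, Finset.prod_const, Finset.card_univ,
        Fintype.card_fin]
    rw [hsum, hprod]
    by_cases hmem : S < s
    · have h1 : (0:ℝ) < 1 - S / s := by
        rw [sub_pos]; exact (div_lt_one hs0).mpr hmem
      rw [if_pos h1, Set.indicator_of_mem (Set.mem_Ioi.mpr hmem)]
      have e1 : (s - S) ^ (t - 1) = s ^ (t - 1) * (1 - S / s) ^ (t - 1) := by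
        rw [show s - S = s * (1 - S / s) by field_simp, Real.mul_rpow hs0.le h1.le]
      have e2 : s ^ (-(n : ℝ)) = (s ^ n)⁻¹ := by
        rw [← Real.rpow_natCast s n, ← Real.rpow_neg hs0.le]
      rw [e1, e2]
      have hsn : (s : ℝ) ^ n ≠ 0 := pow_ne_zero _ hs0.ne'
      field_simp
    · have h1 : ¬ (0:ℝ) < 1 - S / s := by
        rw [not_lt, sub_nonpos]
        exact (one_le_div hs0).mpr (not_lt.mp hmem)
      rw [if_neg h1, Set.indicator_of_notMem (by simpa using hmem)]
      simp
  rw [setIntegral_congr_fun measurableSet_Ioi key,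
    setIntegral_indicator measurableSet_Ioi, Set.Ioi_inter_Ioi, max_eq_right hS0,
    integral_const_mul]
  have trans : ∫ s in Set.Ioi S, (s - S) ^ (t - 1) * Real.exp (-s)
      = ∫ u in Set.Ioi (0:ℝ), u ^ (t - 1) * Real.exp (-(u + S)) := by
    rw [← integral_indicator (measurableSet_Ioi (a := S)),
      ← integral_indicator (measurableSet_Ioi (a := (0:ℝ)))]
    rw [← integral_add_right_eq_self
      (fun s => Set.indicator (Set.Ioi S) (fun s => (s - S) ^ (t - 1) * Real.exp (-s)) s) S]
    congr 1
    ext u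
    by_cases hu : 0 < u
    · rw [Set.indicator_of_mem (by simpa using hu : u + S ∈ Set.Ioi S),
        Set.indicator_of_mem (by simpa using hu)]
      simp
    · rw [Set.indicator_of_notMem (by simpa using hu),
        Set.indicator_of_notMem (by simpa using hu)]
  rw [trans]
  have expand : ∫ u in Set.Ioi (0:ℝ), u ^ (t - 1) * Real.exp (-(u + S))
      = Real.exp (-S) * ∫ u in Set.Ioi (0:ℝ), Real.exp (-u) * u ^ (t - 1) := by
    rw [← integral_const_mul]
    congr 1
    ext u
    rw [neg_add, Real.exp_add]
    ring
  rw [expand, ← Real.Gamma_eq_integral ht]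
  field_simp
end
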